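/- arXiv:2101.03591 — 5 statements merged into one kernel-verified Lean document; each statement's English description precedes it below -/
import Mathlib

section
/- Two presentations P and Q present isomorphic monoids, ⟦P⟧ ≅ ⟦Q⟧, if and only if there exist a presentation R and morphisms of presentations f : P → R and g : Q → R such that the induced monoid homomorphisms ⟦f⟧ : ⟦P⟧ → ⟦R⟧ and ⟦g⟧ : ⟦Q⟧ → ⟦R⟧ are isomorphisms. -/
/-!
Every monoid `M` has a standard presentation, with the elements of `M` as generators and all
equations between words that hold in `M` as relations; it presents `M` itself. Any homomorphism
`φ : ⟦P⟧ →* M` is induced by the morphism of presentations sending a generator to `φ` of its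
class, and this induced map is bijective when `φ` is. Applied to an isomorphism `⟦P⟧ ≃* ⟦Q⟧` and
to the identity of `⟦Q⟧`, this gives the required cospan into the standard presentation of
`⟦Q⟧`; conversely, two isomorphisms into `⟦R⟧` compose to `⟦P⟧ ≃* ⟦Q⟧`.
-/

/-- A presentation of a monoid: a type of generators and a set of relations
between words (elements of the free monoid) over the generators. -/
structure MonPres : Type 1 where
  gen : Type
  rel : Set (FreeMonoid gen × FreeMonoid gen)

namespace MonPres

/-- The congruence on the free monoid generated by the relations. -/
def con (P : MonPres) : Con (FreeMonoid P.gen) :=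
  conGen fun u v => (u, v) ∈ P.rel

/-- The monoid presented by a presentation. -/
abbrev Presented (P : MonPres) : Type := P.con.Quotient

end MonPres

/-- A morphism of presentations. -/
structure MonPresHom (P Q : MonPres) where
  toFun : P.gen → Q.gen
  map_rel : ∀ p ∈ P.rel,
    (FreeMonoid.map toFun p.1, FreeMonoid.map toFun p.2) ∈ Q.rel

namespace MonPresHom

/-- The monoid homomorphism induced on presented monoids. -/
def induced {P Q : MonPres} (f : MonPresHom P Q) : P.Presented →* Q.Presented :=
  Con.lift P.con ((Con.mk' Q.con).comp (FreeMonoid.map f.toFun)) (by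
    refine Con.conGen_le.mpr ?_
    intro x y hxy
    simp only [Con.ker_rel, MonoidHom.comp_apply, Con.coe_mk']
    exact (Con.eq _).mpr (ConGen.Rel.of _ _ (f.map_rel (x, y) hxy)))

/-- Identity morphism of presentations. -/
def id (P : MonPres) : MonPresHom P P where
  toFun := _root_.id
  map_rel := by intro p hp; simpa using hp

/-- Composition of morphisms of presentations. -/
def comp {P Q R : MonPres} (g : MonPresHom Q R) (f : MonPresHom P Q) :
    MonPresHom P R where
  toFun := g.toFun ∘ f.toFun
  map_rel := by
    intro p hp
    have h := g.map_rel _ (f.map_rel p hp)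
    simpa [FreeMonoid.map_comp] using h

end MonPresHom

/-- The standard presentation of a monoid `M`: generators are the elements of
`M`, and relations are all pairs of words whose products in `M` coincide. -/
def stdPres (M : Type) [Monoid M] : MonPres where
  gen := M
  rel := {p | FreeMonoid.lift (id : M → M) p.1 = FreeMonoid.lift (id : M → M) p.2}

theorem stdPres_con_eq_ker (M : Type) [Monoid M] :
    (stdPres M).con = Con.ker (FreeMonoid.lift (id : M → M)) :=
  Con.conGen_of_con (Con.ker _)

noncomputable def stdPresEquiv (M : Type) [Monoid M] : (stdPres M).Presented ≃* M :=
  (Con.congr (MulEquiv.refl _) (stdPres_con_eq_ker M)).trans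
    (Con.quotientKerEquivOfSurjective _ fun m => ⟨FreeMonoid.of m, rfl⟩)

section toStdPres

variable {P : MonPres} {M : Type} [Monoid M]

theorem lift_id_map_mk'_of (φ : P.Presented →* M) (w : FreeMonoid P.gen) :
    FreeMonoid.lift (id : M → M) (FreeMonoid.map (fun g => φ (P.con.mk' (.of g))) w) =
      φ (P.con.mk' w) :=
  DFunLike.congr_fun (f := (FreeMonoid.lift id).comp (FreeMonoid.map _))
    (g := φ.comp P.con.mk') (FreeMonoid.hom_eq fun _ => rfl) w

def MonPresHom.toStdPres (φ : P.Presented →* M) : MonPresHom P (stdPres M) where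
  toFun g := φ (P.con.mk' (.of g))
  map_rel p hp :=
    (lift_id_map_mk'_of φ p.1).trans <|
      (congrArg φ ((Con.eq _).mpr (.of _ _ hp))).trans (lift_id_map_mk'_of φ p.2).symm

theorem MonPresHom.stdPresEquiv_induced_toStdPres (φ : P.Presented →* M) (x : P.Presented) :
    stdPresEquiv M ((toStdPres φ).induced x) = φ x := by
  induction x using Con.induction_on with
  | H w => exact lift_id_map_mk'_of φ w

theorem MonPresHom.bijective_induced_toStdPres {φ : P.Presented →* M}
    (hφ : Function.Bijective φ) : Function.Bijective (toStdPres φ).induced := by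
  refine (Function.Bijective.of_comp_iff' (stdPresEquiv M).bijective _).mp ?_
  convert hφ using 1
  exact funext (stdPresEquiv_induced_toStdPres φ)

end toStdPres

/-- two presentations present isomorphic monoids iff there is a
cospan of morphisms of presentations inducing isomorphisms on presented
monoids. -/
theorem stmt2 (P Q : MonPres) :
    Nonempty (P.Presented ≃* Q.Presented) ↔
      ∃ (R : MonPres) (f : MonPresHom P R) (g : MonPresHom Q R),
        Function.Bijective f.induced ∧ Function.Bijective g.induced := by
  constructor
  · rintro ⟨e⟩
    exact ⟨stdPres Q.Presented, .toStdPres e.toMonoidHom, .toStdPres (MonoidHom.id _),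
      MonPresHom.bijective_induced_toStdPres e.bijective,
      MonPresHom.bijective_induced_toStdPres Function.bijective_id⟩
  · rintro ⟨R, f, g, hf, hg⟩
    exact ⟨(MulEquiv.ofBijective _ hf).trans (MulEquiv.ofBijective _ hg).symm⟩
end

section
/- Given two finite presentations P and Q, the presented monoids ⟦P⟧ and ⟦Q⟧ are isomorphic if and only if P and Q are Tietze equivalent. -/
namespace MonPres

/-- (T1) Adding a derivable generator: a fresh generator (`none`) together
with a relation `u → a`. -/
def addGen (P : MonPres) (u : FreeMonoid P.gen) : MonPres where
  gen := Option P.gen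
  rel := (fun p : FreeMonoid P.gen × FreeMonoid P.gen =>
      (FreeMonoid.map some p.1, FreeMonoid.map some p.2)) '' P.rel ∪
    {(FreeMonoid.map some u, FreeMonoid.of (none : Option P.gen))}

/-- (T2) Adding a relation `u → v`. -/
def addRel (P : MonPres) (u v : FreeMonoid P.gen) : MonPres where
  gen := P.gen
  rel := insert (u, v) P.rel

/-- The inclusion of `P` into `P.addGen u`. -/
def addGenIncl (P : MonPres) (u : FreeMonoid P.gen) :
    MonPresHom P (P.addGen u) where
  toFun := some
  map_rel := fun p hp => Or.inl ⟨p, hp, rfl⟩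

/-- The inclusion of `P` into `P.addRel u v`. -/
def addRelIncl (P : MonPres) (u v : FreeMonoid P.gen) :
    MonPresHom P (P.addRel u v) where
  toFun := _root_.id
  map_rel := by
    intro p hp
    have hm : FreeMonoid.map (_root_.id : P.gen → P.gen) = MonoidHom.id _ :=
      FreeMonoid.hom_eq (fun _ => rfl)
    change (FreeMonoid.map (_root_.id : P.gen → P.gen) p.1,
      FreeMonoid.map (_root_.id : P.gen → P.gen) p.2) ∈ insert (u, v) P.rel
    rw [hm, MonoidHom.id_apply, MonoidHom.id_apply]
    exact Set.mem_insert_of_mem _ hp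

end MonPres

/-- One elementary Tietze transformation step, together with bijective
renamings of generators (isomorphic presentations are identified). -/
inductive TietzeStep : MonPres → MonPres → Prop
  | addGen (P : MonPres) (u : FreeMonoid P.gen) : TietzeStep P (P.addGen u)
  | addRel (P : MonPres) (u v : FreeMonoid P.gen) (h : P.con u v) :
      TietzeStep P (P.addRel u v)
  | rename (P Q : MonPres) (e : P.gen ≃ Q.gen)
      (h : Q.rel = (fun p : FreeMonoid P.gen × FreeMonoid P.gen =>
        (FreeMonoid.map e p.1, FreeMonoid.map e p.2)) '' P.rel) :
      TietzeStep P Q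

/-- Tietze equivalence: the smallest equivalence relation containing the
elementary Tietze transformations. -/
def TietzeEquiv : MonPres → MonPres → Prop := Relation.EqvGen TietzeStep

/-!
Choose words `w y ∈ P₁*` representing `e⁻¹ y` and `v x ∈ Q₁*` representing `e x`, for an
isomorphism `e : ⟦P⟧ ≃* ⟦Q⟧`. Adjoining the generators of `Q` to `P` with defining relations
`w y → y` takes finitely many (T1) steps. Afterwards every word `u ∈ Q₁*` is congruent to its
substitution `w(u) ∈ P₁*`, and substituting `w` realises `e⁻¹`, so the relations of `Q` and the
relations `v x → x` are derivable and can be added by finitely many (T2) steps. Up to swapping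
the two sides, this is the presentation obtained from `Q` in the same way. Conversely, every
Tietze step induces an isomorphism of presented monoids.
-/

open FreeMonoid

namespace MonPres

variable {P Q : MonPres}

def mapRel {A B : Type} (f : A → B) (p : FreeMonoid A × FreeMonoid A) :
    FreeMonoid B × FreeMonoid B :=
  (map f p.1, map f p.2)

@[simp]
theorem mapRel_mapRel {A B C : Type} (g : B → C) (f : A → B) (p : FreeMonoid A × FreeMonoid A) :
    mapRel g (mapRel f p) = mapRel (g ∘ f) p := by
  simp [mapRel, map_map]

theorem con_of_mem {u v : FreeMonoid P.gen} (h : (u, v) ∈ P.rel) : P.con u v :=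
  ConGen.Rel.of _ _ h

theorem hom_ext {M : Type*} [Monoid M] {f g : P.Presented →* M}
    (h : ∀ x, f (of x : FreeMonoid P.gen) = g (of x : FreeMonoid P.gen)) : f = g :=
  Con.lift_funext f g fun w =>
    DFunLike.congr_fun (hom_eq (f := f.comp P.con.mk') (g := g.comp P.con.mk') h) w

def lift {M : Type*} [Monoid M] (f : P.gen → M)
    (hf : ∀ p ∈ P.rel, FreeMonoid.lift f p.1 = FreeMonoid.lift f p.2) : P.Presented →* M :=
  P.con.lift (FreeMonoid.lift f) (Con.conGen_le.mpr fun x y hxy => hf (x, y) hxy)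

theorem mk_lift_eq {f : Q.Presented →* P.Presented} {w : Q.gen → FreeMonoid P.gen}
    (hw : ∀ y, (w y : P.Presented) = f (of y : FreeMonoid Q.gen)) (u : FreeMonoid Q.gen) :
    (FreeMonoid.lift w u : P.Presented) = f u :=
  DFunLike.congr_fun
    (hom_eq (f := P.con.mk'.comp (FreeMonoid.lift w)) (g := f.comp Q.con.mk') hw) u

end MonPres

namespace MonPresHom

variable {P Q : MonPres}

theorem con_map (f : MonPresHom P Q) {a b : FreeMonoid P.gen} (h : P.con a b) :
    Q.con (map f.toFun a) (map f.toFun b) :=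
  (Con.eq _).mp (congrArg f.induced ((Con.eq _).mpr h))

def inducedEquiv (f : MonPresHom P Q) (g : MonPresHom Q P)
    (hgf : Function.LeftInverse g.toFun f.toFun) (hfg : Function.RightInverse g.toFun f.toFun) :
    P.Presented ≃* Q.Presented :=
  MonoidHom.toMulEquiv f.induced g.induced
    (MonPres.hom_ext fun x => congrArg (fun x => ((of x : FreeMonoid P.gen) : P.Presented)) (hgf x))
    (MonPres.hom_ext fun y => congrArg (fun y => ((of y : FreeMonoid Q.gen) : Q.Presented)) (hfg y))

end MonPresHom

namespace MonPres

variable {P Q : MonPres}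

theorem addRel_con {u v : FreeMonoid P.gen} (h : P.con u v) : (P.addRel u v).con = P.con :=
  le_antisymm
    (Con.conGen_le.mpr fun x y hxy => by
      rcases hxy with hxy | hxy
      · cases hxy
        exact h
      · exact con_of_mem hxy)
    (Con.conGen_mono fun _ _ hxy => Or.inr hxy)

def addRelEquiv {u v : FreeMonoid P.gen} (h : P.con u v) :
    P.Presented ≃* (P.addRel u v).Presented :=
  Con.congr (MulEquiv.refl _) (by rw [addRel_con h]; rfl)

theorem addGen_rel (u : FreeMonoid P.gen) :
    (P.addGen u).rel = mapRel some '' P.rel ∪ {(map some u, of none)} :=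
  rfl

def addGenRetract (u : FreeMonoid P.gen) : (P.addGen u).Presented →* P.Presented :=
  (P.addGen u).lift (Option.elim · (u : P.Presented) fun x => (of x : FreeMonoid P.gen)) <| by
    have lift_comp_map_some : (FreeMonoid.lift (Option.elim · (u : P.Presented)
        fun x => (of x : FreeMonoid P.gen))).comp (map some) = P.con.mk' := hom_eq fun _ => rfl
    rintro _ (⟨⟨a, b⟩, hab, rfl⟩ | rfl)
    · exact (DFunLike.congr_fun lift_comp_map_some a).trans
        (((Con.eq _).mpr (con_of_mem hab)).trans (DFunLike.congr_fun lift_comp_map_some b).symm)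
    · exact DFunLike.congr_fun lift_comp_map_some u

def addGenEquiv (u : FreeMonoid P.gen) : P.Presented ≃* (P.addGen u).Presented :=
  MonoidHom.toMulEquiv (P.addGenIncl u).induced (addGenRetract u) (hom_ext fun _ => rfl) <|
    hom_ext fun
      | some _ => rfl
      | none => (Con.eq _).mpr (con_of_mem (P := P.addGen u) (Or.inr rfl))

def renameEquiv (e : P.gen ≃ Q.gen) (h : Q.rel = mapRel e '' P.rel) :
    P.Presented ≃* Q.Presented :=
  MonPresHom.inducedEquiv ⟨e, fun p hp => h ▸ Set.mem_image_of_mem _ hp⟩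
    ⟨e.symm, fun p hp => by
      obtain ⟨q, hq, rfl⟩ := h ▸ hp
      simpa [mapRel, map_map] using hq⟩
    e.left_inv e.right_inv

end MonPres

theorem TietzeStep.nonempty_mulEquiv {P Q : MonPres} (h : TietzeStep P Q) :
    Nonempty (P.Presented ≃* Q.Presented) := by
  cases h with
  | addGen u => exact ⟨MonPres.addGenEquiv u⟩
  | addRel u v huv => exact ⟨MonPres.addRelEquiv huv⟩
  | rename Q e he => exact ⟨MonPres.renameEquiv e he⟩

namespace TietzeEquiv

theorem nonempty_mulEquiv {P Q : MonPres} (h : TietzeEquiv P Q) :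
    Nonempty (P.Presented ≃* Q.Presented) := by
  induction h with
  | rel _ _ h => exact h.nonempty_mulEquiv
  | refl => exact ⟨MulEquiv.refl _⟩
  | symm _ _ _ ih => exact ih.map MulEquiv.symm
  | trans _ _ _ _ _ ih₁ ih₂ => exact ⟨ih₁.some.trans ih₂.some⟩

theorem refl (P : MonPres) : TietzeEquiv P P := Relation.EqvGen.refl P

theorem symm {P Q : MonPres} (h : TietzeEquiv P Q) : TietzeEquiv Q P :=
  Relation.EqvGen.symm _ _ h

theorem trans {P Q R : MonPres} (h₁ : TietzeEquiv P Q) (h₂ : TietzeEquiv Q R) :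
    TietzeEquiv P R :=
  Relation.EqvGen.trans _ _ _ h₁ h₂

theorem of_step {P Q : MonPres} (h : TietzeStep P Q) : TietzeEquiv P Q :=
  Relation.EqvGen.rel _ _ h

theorem of_rename {P Q : MonPres} (e : P.gen ≃ Q.gen) (h : Q.rel = MonPres.mapRel e '' P.rel) :
    TietzeEquiv P Q :=
  of_step (.rename P Q e h)

end TietzeEquiv

namespace MonPres

variable {P Q : MonPres}

abbrev addRels (P : MonPres) (S : Set (FreeMonoid P.gen × FreeMonoid P.gen)) : MonPres :=
  ⟨P.gen, P.rel ∪ S⟩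

theorem tietzeEquiv_addRels {S : Set (FreeMonoid P.gen × FreeMonoid P.gen)} (hS : S.Finite)
    (h : ∀ p ∈ S, P.con p.1 p.2) : TietzeEquiv P (P.addRels S) := by
  induction S, hS using Set.Finite.induction_on with
  | empty => simpa [addRels] using TietzeEquiv.refl P
  | @insert a s _ _ ih =>
    have step : TietzeStep (P.addRels s) ((P.addRels s).addRel a.1 a.2) :=
      .addRel _ _ _ (Con.conGen_mono (fun _ _ h => Or.inl h) (h a (Set.mem_insert a s)))
    have : (P.addRels s).addRel a.1 a.2 = P.addRels (insert a s) :=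
      (congrArg (MonPres.mk P.gen) Set.union_insert).symm
    exact (ih fun p hp => h p (Set.mem_insert_of_mem a hp)).trans (this ▸ .of_step step)

abbrev extend (P : MonPres) (Y : Type) (w : Y → FreeMonoid P.gen) : MonPres where
  gen := P.gen ⊕ Y
  rel := mapRel Sum.inl '' P.rel ∪ Set.range fun y => (map Sum.inl (w y), of (Sum.inr y))

def extendIncl {Y : Type} (w : Y → FreeMonoid P.gen) : MonPresHom P (P.extend Y w) where
  toFun := Sum.inl
  map_rel p hp := Or.inl ⟨p, hp, rfl⟩

theorem extend_rel_comp_equiv {Y Z : Type} (e : Y ≃ Z) (w : Z → FreeMonoid P.gen) :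
    (P.extend Z w).rel =
      mapRel (Equiv.sumCongr (Equiv.refl _) e) '' (P.extend Y (w ∘ e)).rel := by
  simp only [Set.image_union, Set.image_image, mapRel_mapRel, ← Set.range_comp]
  congr 1
  rw [← e.surjective.range_comp]
  congr 1
  funext y
  simp [mapRel, map_map, Function.comp_def]

theorem extend_rel_empty (w : PEmpty → FreeMonoid P.gen) :
    (P.extend PEmpty w).rel = mapRel (Equiv.sumEmpty P.gen PEmpty).symm '' P.rel := by
  simp only [Set.range_eq_empty, Set.union_empty]
  rfl

def optionSumEquiv (X α : Type) : Option (X ⊕ α) ≃ X ⊕ Option α where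
  toFun o := o.elim (.inr none) (Sum.map id some)
  invFun := Sum.elim (some ∘ .inl) (Option.elim · none (some ∘ .inr))
  left_inv o := by rcases o with _ | x | a <;> rfl
  right_inv s := by rcases s with x | _ | a <;> rfl

theorem extend_rel_option {α : Type} (w : Option α → FreeMonoid P.gen) :
    (P.extend (Option α) w).rel = mapRel (optionSumEquiv P.gen α) ''
      ((P.extend α (w ∘ some)).addGen (map Sum.inl (w none))).rel := by
  simp only [extend, addGen_rel]
  rw [Option.range_eq]
  simp only [Set.image_union, Set.image_image, Set.image_singleton, mapRel_mapRel,
    ← Set.range_comp]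
  rw [Set.union_singleton, Set.union_insert]
  congr 2
  · simp [map_map, Function.comp_def, optionSumEquiv]
  · congr 1
    funext y
    simp [mapRel, map_map, Function.comp_def, optionSumEquiv]

theorem tietzeEquiv_extend (P : MonPres) (Y : Type) [Finite Y] (w : Y → FreeMonoid P.gen) :
    TietzeEquiv P (P.extend Y w) := by
  induction Y using Finite.induction_empty_option with
  | of_equiv e ih => exact (ih (w ∘ e)).trans (.of_rename _ (extend_rel_comp_equiv e w))
  | h_empty => exact .of_rename _ (extend_rel_empty w)
  | h_option ih =>
    exact (ih (w ∘ some)).trans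
      ((TietzeEquiv.of_step (.addGen _ _)).trans (.of_rename _ (extend_rel_option w)))

theorem con_extend_map_inr {Y : Type} (w : Y → FreeMonoid P.gen) (u : FreeMonoid Y) :
    (P.extend Y w).con (map Sum.inr u) (map Sum.inl (FreeMonoid.lift w u)) := by
  have h : (P.extend Y w).con.mk'.comp (map Sum.inr) =
      (P.extend Y w).con.mk'.comp ((map Sum.inl).comp (FreeMonoid.lift w)) :=
    hom_eq fun y => ((Con.eq _).mpr (con_of_mem (P := P.extend Y w) (Or.inr ⟨y, rfl⟩))).symm
  exact (Con.eq _).mp (DFunLike.congr_fun h u)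

abbrev combine (P Q : MonPres) (w : Q.gen → FreeMonoid P.gen) (v : P.gen → FreeMonoid Q.gen) :
    MonPres :=
  (P.extend Q.gen w).addRels
    (mapRel Sum.inr '' Q.rel ∪ Set.range fun x => (map Sum.inr (v x), of (Sum.inl x)))

theorem tietzeEquiv_combine [Finite P.gen] [Finite Q.gen] (hQ : Q.rel.Finite)
    (e : P.Presented ≃* Q.Presented) {w : Q.gen → FreeMonoid P.gen}
    {v : P.gen → FreeMonoid Q.gen}
    (hw : ∀ y, (w y : P.Presented) = e.symm (of y : FreeMonoid Q.gen))
    (hv : ∀ x, (v x : Q.Presented) = e (of x : FreeMonoid P.gen)) :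
    TietzeEquiv P (P.combine Q w v) := by
  refine (P.tietzeEquiv_extend Q.gen w).trans
    (tietzeEquiv_addRels ((hQ.image _).union (Set.finite_range _)) ?_)
  have mk_lift := mk_lift_eq (f := e.symm.toMonoidHom) hw
  rintro _ (⟨⟨s₁, s₂⟩, hs, rfl⟩ | ⟨x, rfl⟩)
  · have : P.con (FreeMonoid.lift w s₁) (FreeMonoid.lift w s₂) := (Con.eq _).mp <| by
      rw [mk_lift, mk_lift, (Con.eq _).mpr (con_of_mem hs)]
    exact (con_extend_map_inr w s₁).trans
      (((extendIncl w).con_map this).trans (con_extend_map_inr w s₂).symm)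
  · have : P.con (FreeMonoid.lift w (v x)) (of x) := (Con.eq _).mp <| by
      rw [mk_lift, MulEquiv.coe_toMonoidHom, hv, MulEquiv.symm_apply_apply]
    exact (con_extend_map_inr w (v x)).trans ((extendIncl w).con_map this)

theorem tietzeEquiv_combine_swap (P Q : MonPres) (w : Q.gen → FreeMonoid P.gen)
    (v : P.gen → FreeMonoid Q.gen) : TietzeEquiv (Q.combine P v w) (P.combine Q w v) := by
  refine .of_rename (Equiv.sumComm Q.gen P.gen) ?_
  simp only [Set.image_union, Set.image_image, mapRel_mapRel, ← Set.range_comp]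
  rw [Set.union_comm (mapRel _ '' _ ∪ _)]
  congr 2 <;>
  · congr 1
    funext x
    simp [mapRel, map_map, Function.comp_def]

end MonPres

/-- two finite presentations present isomorphic monoids if and
only if they are Tietze equivalent. -/
theorem stmt4 (P Q : MonPres)
    (hP₁ : Finite P.gen) (hP₂ : P.rel.Finite)
    (hQ₁ : Finite Q.gen) (hQ₂ : Q.rel.Finite) :
    Nonempty (P.Presented ≃* Q.Presented) ↔ TietzeEquiv P Q := by
  refine ⟨fun ⟨e⟩ => ?_, TietzeEquiv.nonempty_mulEquiv⟩
  choose w hw using fun y : Q.gen => Con.mk'_surjective (e.symm (of y : FreeMonoid Q.gen))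
  choose v hv using fun x : P.gen => Con.mk'_surjective (e (of x : FreeMonoid P.gen))
  have hP : TietzeEquiv P (P.combine Q w v) := MonPres.tietzeEquiv_combine hQ₂ e hw hv
  have hQ : TietzeEquiv Q (Q.combine P v w) :=
    MonPres.tietzeEquiv_combine hP₂ e.symm hv (by simpa using hw)
  exact hP.trans ((hQ.trans (MonPres.tietzeEquiv_combine_swap P Q w v)).symm)
end

section
/- Let f : P → Q be a morphism of presentations with Q reflexive such that the underlying function f : P₁ → Q₁ is surjective and, for all words u, v ∈ P₁*, (f*(u), f*(v)) ∈ Q₂ implies (u, v) ∈ P₂. Then the induced monoid homomorphism ⟦f⟧ : ⟦P⟧ → ⟦Q⟧ is an isomorphism. -/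
/-- A presentation is reflexive when every word is related to itself. -/
def MonPres.Reflexive (P : MonPres) : Prop :=
  ∀ u : FreeMonoid P.gen, (u, u) ∈ P.rel

/-! Since `f` reflects relations, any section `s` of the surjective generator map is a
morphism `Q → P`. It induces an inverse of `⟦f⟧`: one way because `f ∘ s = id` on words, the
other because `f (s (f u)) = f u`, so reflexivity of `Q` and reflection give `s (f u) ∼ u`. -/

theorem FreeMonoid.rightInverse_map {α β : Type*} {f : α → β} {s : β → α}
    (h : Function.RightInverse s f) : Function.RightInverse (map s) (map f) := fun w => by
  rw [map_map, h.id, map_id, MonoidHom.id_apply]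

namespace MonPresHom

variable {P Q : MonPres}

def ReflectsRel (f : MonPresHom P Q) : Prop :=
  ∀ u v : FreeMonoid P.gen,
    (FreeMonoid.map f.toFun u, FreeMonoid.map f.toFun v) ∈ Q.rel → (u, v) ∈ P.rel

variable {f : MonPresHom P Q} {s : Q.gen → P.gen}

def ofRightInverse (hf : f.ReflectsRel) (hs : Function.RightInverse s f.toFun) :
    MonPresHom Q P where
  toFun := s
  map_rel p hp := hf _ _ <| by
    rwa [FreeMonoid.rightInverse_map hs, FreeMonoid.rightInverse_map hs]

theorem rightInverse_induced_ofRightInverse (hf : f.ReflectsRel)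
    (hs : Function.RightInverse s f.toFun) :
    Function.RightInverse (ofRightInverse hf hs).induced f.induced := by
  rintro ⟨w⟩
  exact congrArg _ (FreeMonoid.rightInverse_map hs w)

theorem leftInverse_induced_ofRightInverse (hQ : Q.Reflexive) (hf : f.ReflectsRel)
    (hs : Function.RightInverse s f.toFun) :
    Function.LeftInverse (ofRightInverse hf hs).induced f.induced := by
  rintro ⟨u⟩
  refine (Con.eq _).mpr (ConGen.Rel.of _ _ (hf _ _ ?_))
  change (FreeMonoid.map f.toFun (FreeMonoid.map s _), _) ∈ Q.rel
  rw [FreeMonoid.rightInverse_map hs]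
  exact hQ _

end MonPresHom

/-- a morphism of presentations to a reflexive presentation which
is surjective on generators and reflects relations induces an isomorphism of
presented monoids. -/
theorem stmt8 (P Q : MonPres) (f : MonPresHom P Q) (hQ : Q.Reflexive)
    (hsurj : Function.Surjective f.toFun)
    (hrefl : ∀ u v : FreeMonoid P.gen,
      (FreeMonoid.map f.toFun u, FreeMonoid.map f.toFun v) ∈ Q.rel →
        (u, v) ∈ P.rel) :
    Function.Bijective f.induced :=
  let hs := Function.rightInverse_surjInv hsurj
  ⟨(MonPresHom.leftInverse_induced_ofRightInverse hQ hrefl hs).injective,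
    (MonPresHom.rightInverse_induced_ofRightInverse hrefl hs).surjective⟩
end

section
/- Let Q be a reflexive presentation that is pseudo-fibrant, i.e. (i) for every word u ∈ Q₁* there is a generator a ∈ Q₁ with (u, a) ∈ Q₂, and (ii) Q₂ is a congruence on Q₁* (so u ∼_Q v if and only if (u,v) ∈ Q₂). Let i : P → Q be an inclusion of a subpresentation such that ⟦i⟧ : ⟦P⟧ → ⟦Q⟧ is an isomorphism. Then Q is the union of a countable increasing chain of subpresentations P ⊆ P⁰ ⊆ P¹ ⊆ P² ⊆ … ⊆ Q, where P⁰ adds to P every generator a ∈ Q₁ ∖ P₁ together with one relation (u_a, a) ∈ Q₂ with u_a ∈ P₁*, and each P^{k+1} adds to P^k only relations of Q₂ of the forms u → u (for u a word over P^k₁), v → u (when u → v ∈ P^k₂), u → w (when u → v, v → w ∈ P^k₂), and w u w' → w v w' (when u → v ∈ P^k₂ and w, w' are words over P^k₁). -/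
/-- A word over a subset `S` of the generators: all its letters lie in `S`. -/
def wordOver {α : Type} (S : Set α) (u : FreeMonoid α) : Prop :=
  ∀ x ∈ FreeMonoid.toList u, x ∈ S

/-- A subpresentation of `Q`: a subset of the generators and a subset of the
relations, whose words only involve the chosen generators. -/
structure SubPres (Q : MonPres) where
  gens : Set Q.gen
  rels : Set (FreeMonoid Q.gen × FreeMonoid Q.gen)
  rels_sub : rels ⊆ Q.rel
  rels_gens : ∀ p ∈ rels, wordOver gens p.1 ∧ wordOver gens p.2

namespace SubPres

variable {Q : MonPres}

/-- The presentation underlying a subpresentation. -/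
def toPres (S : SubPres Q) : MonPres where
  gen := S.gens
  rel := {p | (FreeMonoid.map Subtype.val p.1, FreeMonoid.map Subtype.val p.2) ∈ S.rels}

/-- The inclusion morphism of a subpresentation. -/
def incl (S : SubPres Q) : MonPresHom S.toPres Q where
  toFun := Subtype.val
  map_rel := fun _ hp => S.rels_sub hp

end SubPres


/-- One closure step: add reflexivity, symmetry, transitivity and
two-sided-multiplication consequences of a relation set. -/
def nextRels {α : Type} (R : Set (FreeMonoid α × FreeMonoid α)) :
    Set (FreeMonoid α × FreeMonoid α) :=
  R ∪ {p | p.1 = p.2} ∪ {p | (p.2, p.1) ∈ R}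
    ∪ {p | ∃ v, (p.1, v) ∈ R ∧ (v, p.2) ∈ R}
    ∪ {p | ∃ u v w w', (u, v) ∈ R ∧ p = (w * u * w', w * v * w')}

theorem subset_nextRels {α : Type} (R : Set (FreeMonoid α × FreeMonoid α)) :
    R ⊆ nextRels R := fun p hp => Or.inl (Or.inl (Or.inl (Or.inl hp)))

theorem nextRels_refl {α : Type} (R : Set (FreeMonoid α × FreeMonoid α)) (u : FreeMonoid α) :
    (u, u) ∈ nextRels R := Or.inl (Or.inl (Or.inl (Or.inr rfl)))

theorem nextRels_symm {α : Type} {R : Set (FreeMonoid α × FreeMonoid α)} {u v : FreeMonoid α}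
    (h : (u, v) ∈ R) : (v, u) ∈ nextRels R := Or.inl (Or.inl (Or.inr h))

theorem nextRels_trans {α : Type} {R : Set (FreeMonoid α × FreeMonoid α)} {u v w : FreeMonoid α}
    (h : (u, v) ∈ R) (h' : (v, w) ∈ R) : (u, w) ∈ nextRels R :=
  Or.inl (Or.inr ⟨v, h, h'⟩)

theorem nextRels_mul {α : Type} {R : Set (FreeMonoid α × FreeMonoid α)} {u v : FreeMonoid α}
    (h : (u, v) ∈ R) (w w' : FreeMonoid α) : (w * u * w', w * v * w') ∈ nextRels R :=
  Or.inr ⟨u, v, w, w', h, rfl⟩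

/-- The chain of relation sets obtained by iterating `nextRels`. -/
def chainRels {α : Type} (R0 : Set (FreeMonoid α × FreeMonoid α)) : ℕ → Set (FreeMonoid α × FreeMonoid α)
  | 0 => R0
  | k + 1 => nextRels (chainRels R0 k)

theorem chainRels_mono {α : Type} (R0 : Set (FreeMonoid α × FreeMonoid α)) {k j : ℕ} (h : k ≤ j) :
    chainRels R0 k ⊆ chainRels R0 j := by
  induction j with
  | zero => simpa [Nat.le_zero.mp h] using Set.Subset.rfl
  | succ j ih =>
    rcases Nat.lt_or_ge k (j+1) with h' | h'
    · exact (ih (Nat.lt_succ_iff.mp h')).trans (subset_nextRels _)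
    · have : k = j + 1 := le_antisymm h h'
      subst this; exact Set.Subset.rfl

/-- The union of the chain, as a congruence. -/
def chainCon {α : Type} (R0 : Set (FreeMonoid α × FreeMonoid α)) : Con (FreeMonoid α) where
  r u v := ∃ k, (u, v) ∈ chainRels R0 k
  iseqv := by
    refine ⟨fun u => ⟨1, nextRels_refl _ u⟩, ?_, ?_⟩
    · rintro u v ⟨k, hk⟩
      exact ⟨k + 1, nextRels_symm hk⟩
    · rintro u v w ⟨k, hk⟩ ⟨j, hj⟩
      exact ⟨max k j + 1, nextRels_trans (chainRels_mono R0 (le_max_left k j) hk)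
        (chainRels_mono R0 (le_max_right k j) hj)⟩
  mul' := by
    rintro u v u' v' ⟨k, hk⟩ ⟨j, hj⟩
    have h1 : (u * u', v * u') ∈ chainRels R0 (max k j + 1) := by
      have := nextRels_mul (chainRels_mono R0 (le_max_left k j) hk) 1 u'
      simpa [chainRels] using this
    have h2 : (v * u', v * v') ∈ chainRels R0 (max k j + 1) := by
      have := nextRels_mul (chainRels_mono R0 (le_max_right k j) hj) v 1
      simpa [chainRels] using this
    exact ⟨max k j + 2, nextRels_trans h1 h2⟩

theorem chainCon_iff {α : Type} (R0 : Set (FreeMonoid α × FreeMonoid α)) (u v : FreeMonoid α) :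
    chainCon R0 u v ↔ ∃ k, (u, v) ∈ chainRels R0 k := Iff.rfl

theorem map_val_pmap {α : Type} (S : Set α) :
    ∀ (l : List α) (H : ∀ x ∈ l, x ∈ S),
      List.map Subtype.val (List.pmap (fun x hx => (⟨x, hx⟩ : S)) l H) = l := by
  intro l
  induction l with
  | nil => intro H; simp
  | cons a t ih => intro H; simp [ih]

/-- let `Q` be a reflexive pseudo-fibrant presentation and
`P ⊆ Q` a subpresentation whose inclusion induces an isomorphism of presented
monoids. Then `Q` is the union of a countable increasing chain of
subpresentations `P⁰ ⊆ P¹ ⊆ ⋯ ⊆ Q`, where `P⁰` adds to `P` every generator of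
`Q` missing from `P` together with one relation `u_a → a` (`u_a` a word over
the generators of `P`), and `P^{k+1}` adds to `P^k` only relations of `Q` of
the forms `u → u`, `v → u` (for `u → v ∈ P^k`), `u → w` (for
`u → v, v → w ∈ P^k`) and `w u w' → w v w'` (for `u → v ∈ P^k`). -/
theorem stmt11 (Q : MonPres) (hQrefl : Q.Reflexive)
    (hfib₁ : ∀ u : FreeMonoid Q.gen, ∃ a : Q.gen, (u, FreeMonoid.of a) ∈ Q.rel)
    (hfib₂ : ∀ u v : FreeMonoid Q.gen, Q.con u v ↔ (u, v) ∈ Q.rel)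
    (P : SubPres Q) (hiso : Function.Bijective P.incl.induced) :
    ∃ c : ℕ → SubPres Q,
      -- the chain is increasing
      (∀ k, (c k).gens ⊆ (c (k + 1)).gens ∧ (c k).rels ⊆ (c (k + 1)).rels) ∧
      -- `P⁰` contains `P`, has all the generators of `Q`, and its new
      -- relations are of the form `u_a → a` with `u_a` a word over `P₁`
      P.gens ⊆ (c 0).gens ∧ P.rels ⊆ (c 0).rels ∧ (c 0).gens = Set.univ ∧
      (∀ a : Q.gen, a ∉ P.gens → ∃ u : FreeMonoid Q.gen,
        wordOver P.gens u ∧ (u, FreeMonoid.of a) ∈ (c 0).rels) ∧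
      (∀ p ∈ (c 0).rels, p ∈ P.rels ∨
        ∃ a : Q.gen, a ∉ P.gens ∧ ∃ u : FreeMonoid Q.gen,
          wordOver P.gens u ∧ p = (u, FreeMonoid.of a)) ∧
      -- each `P^{k+1}` only adds relations of the prescribed shapes
      (∀ k, (c (k + 1)).gens = (c k).gens ∧
        ∀ p ∈ (c (k + 1)).rels, p ∈ (c k).rels ∨
          (∃ u, wordOver (c k).gens u ∧ p = (u, u)) ∨
          (∃ u v, (u, v) ∈ (c k).rels ∧ p = (v, u)) ∨
          (∃ u v w, (u, v) ∈ (c k).rels ∧ (v, w) ∈ (c k).rels ∧ p = (u, w)) ∨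
          (∃ u v w w', (u, v) ∈ (c k).rels ∧ wordOver (c k).gens w ∧
            wordOver (c k).gens w' ∧ p = (w * u * w', w * v * w'))) ∧
      -- the union of the chain is `Q`
      (⋃ k, (c k).rels) = Q.rel := by
  classical
  -- choose, for each generator missing from `P`, a word over `P.gens`
  -- related to it in `Q` (using surjectivity of the induced map)
  have hch : ∀ a : Q.gen, a ∉ P.gens → ∃ u : FreeMonoid Q.gen,
      wordOver P.gens u ∧ (u, FreeMonoid.of a) ∈ Q.rel := by
    intro a _
    obtain ⟨x, hx⟩ := hiso.2 ((Con.mk' Q.con) (FreeMonoid.of a))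
    obtain ⟨w, rfl⟩ := Quotient.exists_rep x
    refine ⟨FreeMonoid.map Subtype.val w, ?_, ?_⟩
    · intro y hy
      erw [FreeMonoid.toList_map] at hy
      obtain ⟨s, _, rfl⟩ := List.mem_map.mp hy
      exact s.2
    · have hx' : ((FreeMonoid.map Subtype.val w : FreeMonoid Q.gen) : Q.con.Quotient)
          = ((FreeMonoid.of a : FreeMonoid Q.gen) : Q.con.Quotient) := by
        have := hx
        simp only [MonPresHom.induced, SubPres.incl] at this
        rw [show ((⟦w⟧ : P.toPres.con.Quotient)) = ((w : FreeMonoid P.toPres.gen) :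
          P.toPres.con.Quotient) from rfl, Con.lift_coe] at this
        simp at this ⊢
        exact this
      exact (hfib₂ _ _).1 ((Con.eq _).mp hx')
  choose u₀' hu₀'w hu₀'r using hch
  set u₀ : Q.gen → FreeMonoid Q.gen :=
    fun a => if h : a ∈ P.gens then FreeMonoid.of a else u₀' a h with hu₀def
  have hu₀w : ∀ a, wordOver P.gens (u₀ a) := by
    intro a
    by_cases h : a ∈ P.gens
    · simp only [hu₀def, dif_pos h]
      intro x hx
      simp only [FreeMonoid.toList_of, List.mem_singleton] at hx
      subst hx; exact h
    · simp only [hu₀def, dif_neg h]; exact hu₀'w a h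
  have hu₀r : ∀ a, (u₀ a, FreeMonoid.of a) ∈ Q.rel := by
    intro a
    by_cases h : a ∈ P.gens
    · simp only [hu₀def, dif_pos h]; exact hQrefl _
    · simp only [hu₀def, dif_neg h]; exact hu₀'r a h
  set R0 : Set (FreeMonoid Q.gen × FreeMonoid Q.gen) :=
    P.rels ∪ {p | ∃ a : Q.gen, a ∉ P.gens ∧ p = (u₀ a, FreeMonoid.of a)} with hR0def
  -- every relation in the chain is a relation of `Q`
  have hsub : ∀ k, chainRels R0 k ⊆ Q.rel := by
    intro k
    induction k with
    | zero =>
      rintro p (hp | ⟨a, _, rfl⟩)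
      · exact P.rels_sub hp
      · exact hu₀r a
    | succ k ih =>
      rintro ⟨x, y⟩ ((((hp | hp) | hp) | ⟨v, h1, h2⟩) | ⟨u, v, w, w', h1, h2⟩)
      · exact ih hp
      · simp only [Set.mem_setOf_eq] at hp
        subst hp; exact hQrefl _
      · exact (hfib₂ _ _).1 (Q.con.symm ((hfib₂ _ _).2 (ih hp)))
      · exact (hfib₂ _ _).1 ((Q.con.trans ((hfib₂ _ _).2 (ih h1)) ((hfib₂ _ _).2 (ih h2))))
      · obtain ⟨hx, hy⟩ := Prod.mk.injEq .. ▸ h2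
        subst hx; subst hy
        exact (hfib₂ _ _).1 (Q.con.mul (Q.con.mul (Q.con.refl w) ((hfib₂ _ _).2 (ih h1)))
          (Q.con.refl w'))
  set c : ℕ → SubPres Q := fun k =>
    ⟨Set.univ, chainRels R0 k, hsub k, fun _ _ => ⟨fun _ _ => trivial, fun _ _ => trivial⟩⟩
    with hcdef
  have hCsub : ∀ u v : FreeMonoid Q.gen, chainCon R0 u v → Q.con u v := by
    rintro u v ⟨k, hk⟩
    exact (hfib₂ _ _).2 (hsub k hk)
  -- every word is chain-related to a word over `P.gens`
  have key1 : ∀ u : FreeMonoid Q.gen,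
      wordOver P.gens (FreeMonoid.lift u₀ u) ∧ chainCon R0 u (FreeMonoid.lift u₀ u) := by
    intro u
    induction u using FreeMonoid.recOn with
    | one =>
      constructor
      · intro x hx; simp [wordOver] at hx
      · simpa using (chainCon R0).refl 1
    | of_mul x xs ih =>
      have hof : chainCon R0 (FreeMonoid.of x) (u₀ x) := by
        by_cases h : x ∈ P.gens
        · simp only [hu₀def, dif_pos h]; exact (chainCon R0).refl _
        · exact (chainCon R0).symm ⟨0, Or.inr ⟨x, h, by simp [hu₀def, dif_neg h]⟩⟩
      constructor
      · intro y hy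
        rw [map_mul, FreeMonoid.toList_mul, List.mem_append] at hy
        rcases hy with hy | hy
        · exact hu₀w x y (by simpa using hy)
        · exact ih.1 y hy
      · have hm := Con.mul (chainCon R0) hof ih.2
        have he : (FreeMonoid.lift u₀) (FreeMonoid.of x * xs)
            = u₀ x * (FreeMonoid.lift u₀) xs := by
          rw [map_mul, FreeMonoid.lift_eval_of]
        rw [he]
        exact hm
  -- words over `P.gens` that are congruent in `Q` are chain-related
  have key2 : ∀ x y : FreeMonoid P.toPres.gen, P.toPres.con x y →
      chainCon R0 (FreeMonoid.map Subtype.val x) (FreeMonoid.map Subtype.val y) := by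
    have hle : P.toPres.con ≤
        Con.comap (FreeMonoid.map Subtype.val) (map_mul _) (chainCon R0) := by
      refine Con.conGen_le.mpr ?_
      intro x y hxy
      exact ⟨0, Or.inl hxy⟩
    exact fun x y h => hle h
  refine ⟨c, ?_, ?_, ?_, ?_, ?_, ?_, ?_, ?_⟩
  · exact fun k => ⟨Set.Subset.rfl, subset_nextRels _⟩
  · exact fun a _ => trivial
  · exact fun p hp => Or.inl hp
  · rfl
  · intro a ha
    exact ⟨u₀ a, hu₀w a, Or.inr ⟨a, ha, rfl⟩⟩
  · rintro p (hp | ⟨a, ha, rfl⟩)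
    · exact Or.inl hp
    · exact Or.inr ⟨a, ha, u₀ a, hu₀w a, rfl⟩
  · intro k
    refine ⟨rfl, ?_⟩
    rintro ⟨x, y⟩ ((((hp | hp) | hp) | ⟨v, h1, h2⟩) | ⟨u, v, w, w', h1, h2⟩)
    · exact Or.inl hp
    · simp only [Set.mem_setOf_eq] at hp
      exact Or.inr (Or.inl ⟨x, fun z _ => trivial, by rw [hp]⟩)
    · exact Or.inr (Or.inr (Or.inl ⟨y, x, hp, rfl⟩))
    · exact Or.inr (Or.inr (Or.inr (Or.inl ⟨x, v, y, h1, h2, rfl⟩)))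
    · exact Or.inr (Or.inr (Or.inr (Or.inr
        ⟨u, v, w, w', h1, fun z _ => trivial, fun z _ => trivial, h2⟩)))
  · ext p
    simp only [Set.mem_iUnion]
    constructor
    · rintro ⟨k, hk⟩
      exact hsub k hk
    · intro hp
      obtain ⟨u, v⟩ := p
      have hcon : Q.con u v := (hfib₂ _ _).2 hp
      obtain ⟨hw1, hc1⟩ := key1 u
      obtain ⟨hw2, hc2⟩ := key1 v
      set ut := FreeMonoid.lift u₀ u
      set vt := FreeMonoid.lift u₀ v
      have hQtt : Q.con ut vt :=
        Q.con.trans (Q.con.symm (hCsub _ _ hc1)) (Q.con.trans hcon (hCsub _ _ hc2))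
      -- lift the two words to words over the subpresentation's generators
      set ut' : FreeMonoid P.toPres.gen := FreeMonoid.ofList
        (List.pmap (fun x hx => (⟨x, hx⟩ : P.gens)) (FreeMonoid.toList ut) hw1) with hut'
      set vt' : FreeMonoid P.toPres.gen := FreeMonoid.ofList
        (List.pmap (fun x hx => (⟨x, hx⟩ : P.gens)) (FreeMonoid.toList vt) hw2) with hvt'
      have hmu : FreeMonoid.map Subtype.val ut' = ut := by
        apply FreeMonoid.toList.injective
        erw [FreeMonoid.toList_map, hut']
        exact map_val_pmap P.gens _ hw1
      have hmv : FreeMonoid.map Subtype.val vt' = vt := by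
        apply FreeMonoid.toList.injective
        erw [FreeMonoid.toList_map, hvt']
        exact map_val_pmap P.gens _ hw2
      have hind : ∀ w : FreeMonoid P.toPres.gen,
          P.incl.induced ((w : FreeMonoid P.toPres.gen) : P.toPres.con.Quotient)
            = ((FreeMonoid.map Subtype.val w : FreeMonoid Q.gen) : Q.con.Quotient) := by
        intro w
        simp only [MonPresHom.induced, SubPres.incl, Con.lift_coe]
        simp only [MonoidHom.comp_apply, Con.coe_mk']
        rfl
      have heq : P.incl.induced ((ut' : FreeMonoid P.toPres.gen) : P.toPres.con.Quotient)
          = P.incl.induced ((vt' : FreeMonoid P.toPres.gen) : P.toPres.con.Quotient) := by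
        rw [hind, hind, hmu, hmv]
        exact (Con.eq _).mpr hQtt
      have hcon' : P.toPres.con ut' vt' := (Con.eq _).mp (hiso.1 heq)
      have hctt : chainCon R0 ut vt := by
        have := key2 _ _ hcon'
        rwa [hmu, hmv] at this
      have : chainCon R0 u v :=
        (chainCon R0).trans hc1 ((chainCon R0).trans hctt ((chainCon R0).symm hc2))
      exact this
end

section
/- In the category rPres of reflexive presentations, a morphism belongs to llp(rlp(I)) if and only if its underlying function on generators is injective; equivalently, the cofibrations generated by I are exactly the monomorphisms of rPres. -/
open CategoryTheory

/-- A reflexive presentation: every word is related to itself. -/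
structure RPres : Type 1 where
  pres : MonPres
  refl : ∀ u : FreeMonoid pres.gen, (u, u) ∈ pres.rel

/-- The category of reflexive presentations and morphisms of presentations. -/
instance : Category RPres where
  Hom P Q := MonPresHom P.pres Q.pres
  id P := MonPresHom.id P.pres
  comp f g := g.comp f
  id_comp _ := rfl
  comp_id _ := rfl
  assoc _ _ _ := rfl

/-- The reflexive presentation on a type of generators with no relations
besides the reflexivity ones. -/
def rpresDiag (α : Type) : RPres :=
  ⟨⟨α, Set.diagonal _⟩, fun _ => rfl⟩

/-- The word `a₁ … a_m` in the free monoid on `Fin (m + n)`. -/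
def leftWord (m n : ℕ) : FreeMonoid (Fin (m + n)) :=
  FreeMonoid.ofList (List.ofFn fun i : Fin m => Fin.castAdd n i)

/-- The word `a_{m+1} … a_{m+n}` in the free monoid on `Fin (m + n)`. -/
def rightWord (m n : ℕ) : FreeMonoid (Fin (m + n)) :=
  FreeMonoid.ofList (List.ofFn fun i : Fin n => Fin.natAdd m i)

/-- The reflexive presentation on `m + n` generators with one extra relation
`a₁ … a_m → a_{m+1} … a_{m+n}`. -/
def rpresRel (m n : ℕ) : RPres :=
  ⟨⟨Fin (m + n), insert (leftWord m n, rightWord m n) (Set.diagonal _)⟩,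
    fun _ => Set.mem_insert_iff.mpr (Or.inr rfl)⟩

/-- The generating cofibration `∅ → ⟨a | ⟩`. -/
def iGen : rpresDiag Empty ⟶ rpresDiag PUnit where
  toFun := fun x => x.elim
  map_rel := by rintro ⟨u, v⟩ (h : u = v); subst h; exact rfl

/-- The generating cofibration `⟨a₁,…,a_{m+n} | ⟩ → R^{m,n}`. -/
def iRel (m n : ℕ) : rpresDiag (Fin (m + n)) ⟶ rpresRel m n where
  toFun := _root_.id
  map_rel := by
    rintro ⟨u, v⟩ (h : u = v); subst h
    exact Set.mem_insert_iff.mpr (Or.inr rfl)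

/-- The class `I` of generating cofibrations. -/
inductive IClass : ∀ ⦃X Y : RPres⦄, (X ⟶ Y) → Prop
  | g : IClass iGen
  | r (m n : ℕ) : IClass (iRel m n)

/-- The class `rlp(I)` of trivial fibrations. -/
def RlpI : MorphismProperty RPres := fun _ _ p =>
  ∀ ⦃A B : RPres⦄ (i : A ⟶ B), IClass i → HasLiftingProperty i p

/-- The class `llp(rlp(I))` of cofibrations. -/
def Cofib : MorphismProperty RPres := fun _ _ f =>
  ∀ ⦃X Y : RPres⦄ (p : X ⟶ Y), RlpI p → HasLiftingProperty f p


/-! A morphism `p` of reflexive presentations lies in `rlp(I)` exactly when it is surjective on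
generators (lifting against `∅ → ⟨a |⟩`) and reflects relations (lifting against
`⟨a₁, …, a_{m+n} |⟩ → R^{m,n}`, instantiated at the word lengths `m = |u|`, `n = |v|` of a
relation `u → v`). Against such a `p` every injective `f` lifts: the lift is the top map on the
image of `f` and a chosen `p`-preimage of the bottom map elsewhere, and it preserves relations
because `p` reflects them. Conversely, the map from the chaotic presentation on `Option P₁` to the
chaotic presentation on one generator lies in `rlp(I)`, and a lift of `f` against it exhibits
`some : P₁ → Option P₁` as factoring through `f`, so `f` is injective. Finally, the
monomorphisms of `rPres` are the injective morphisms, by testing against a single generator. -/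

open Function

namespace RPres

theorem hom_ext {P Q : RPres} {f g : P ⟶ Q} (h : f.toFun = g.toFun) : f = g :=
  match f, g, h with
  | ⟨_, _⟩, ⟨_, _⟩, rfl => rfl

def ReflectsRel {X Y : RPres} (p : X ⟶ Y) : Prop :=
  ∀ u v : FreeMonoid X.pres.gen,
    (FreeMonoid.map p.toFun u, FreeMonoid.map p.toFun v) ∈ Y.pres.rel → (u, v) ∈ X.pres.rel

def ofDiag {α : Type} (X : RPres) (w : α → X.pres.gen) : rpresDiag α ⟶ X where
  toFun := w
  map_rel := by rintro ⟨u, v⟩ (rfl : u = v); exact X.refl _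

def chaotic (α : Type) : RPres := ⟨⟨α, Set.univ⟩, fun _ => trivial⟩

def toChaotic {α : Type} (X : RPres) (w : X.pres.gen → α) : X ⟶ chaotic α :=
  ⟨w, fun _ _ => trivial⟩

theorem exists_map_leftWord_rightWord {α : Type} (u v : FreeMonoid α) :
    ∃ w : Fin (u.toList.length + v.toList.length) → α,
      FreeMonoid.map w (leftWord _ _) = u ∧ FreeMonoid.map w (rightWord _ _) = v := by
  refine ⟨Fin.append u.toList.get v.toList.get, ?_, ?_⟩ <;>
  · apply FreeMonoid.toList.injective
    simp [leftWord, rightWord, FreeMonoid.toList_map, List.map_ofFn, comp_def]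

theorem hasLiftingProperty_of_injective {P Q X Y : RPres} {f : P ⟶ Q} {p : X ⟶ Y}
    (hf : Injective f.toFun) (hp : Surjective p.toFun) (hrel : ReflectsRel p) :
    HasLiftingProperty f p := by
  refine ⟨fun {top bot} sq => CommSq.HasLift.mk' ?_⟩
  have hsq (a : P.pres.gen) : p.toFun (top.toFun a) = bot.toFun (f.toFun a) :=
    congrFun (congrArg MonPresHom.toFun sq.w) a
  let h : Q.pres.gen → X.pres.gen := extend f.toFun top.toFun (surjInv hp ∘ bot.toFun)
  have hph : p.toFun ∘ h = bot.toFun := by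
    funext q
    by_cases hq : ∃ a, f.toFun a = q
    · obtain ⟨a, rfl⟩ := hq
      simp only [comp_apply, h, hf.extend_apply, hsq]
    · simp only [comp_apply, h, extend_apply' _ _ _ hq, surjInv_eq]
  let l : Q ⟶ X := ⟨h, fun r hr => hrel _ _ <| by
    simpa only [FreeMonoid.map_map, hph] using bot.map_rel r hr⟩
  exact ⟨l, hom_ext (funext fun a => hf.extend_apply _ _ a), hom_ext hph⟩

section RlpI

variable {X Y : RPres} {p : X ⟶ Y}

theorem surjective_of_rlpI (hp : RlpI p) : Surjective p.toFun := by
  intro y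
  have sq : CommSq (ofDiag X Empty.elim) iGen p (ofDiag Y fun _ => y) :=
    ⟨hom_ext (funext fun a => a.elim)⟩
  have := hp iGen IClass.g
  exact ⟨sq.lift.toFun (), congrFun (congrArg MonPresHom.toFun sq.fac_right) ()⟩

theorem reflectsRel_of_rlpI (hp : RlpI p) : ReflectsRel p := by
  intro u v huv
  obtain ⟨w, hu, hv⟩ := exists_map_leftWord_rightWord u v
  have hw : (FreeMonoid.map (p.toFun ∘ w) (leftWord _ _),
      FreeMonoid.map (p.toFun ∘ w) (rightWord _ _)) ∈ Y.pres.rel := by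
    rwa [← FreeMonoid.map_map, ← FreeMonoid.map_map, hu, hv]
  let g : rpresRel _ _ ⟶ Y := ⟨p.toFun ∘ w, by
    rintro r (rfl | (hr : r.1 = r.2))
    · exact hw
    · exact hr ▸ Y.refl _⟩
  have sq : CommSq (ofDiag X w) (iRel _ _) p g := ⟨rfl⟩
  have := hp _ (IClass.r u.toList.length v.toList.length)
  have hl : sq.lift.toFun = w := congrArg MonPresHom.toFun sq.fac_left
  have hlift : (FreeMonoid.map w (leftWord _ _), FreeMonoid.map w (rightWord _ _)) ∈ X.pres.rel :=
    hl ▸ sq.lift.map_rel _ (Set.mem_insert _ _)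
  rwa [hu, hv] at hlift

theorem rlpI_iff : RlpI p ↔ Surjective p.toFun ∧ ReflectsRel p := by
  refine ⟨fun hp => ⟨surjective_of_rlpI hp, reflectsRel_of_rlpI hp⟩, fun ⟨hs, hr⟩ => ?_⟩
  rintro _ _ i (_ | _)
  · exact hasLiftingProperty_of_injective (fun a => a.elim) hs hr
  · exact hasLiftingProperty_of_injective injective_id hs hr

end RlpI

theorem cofib_iff_injective {P Q : RPres} (f : P ⟶ Q) : Cofib f ↔ Injective f.toFun := by
  refine ⟨fun hf => ?_, fun hf _ _ p hp => ?_⟩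
  · let p : chaotic (Option P.pres.gen) ⟶ chaotic Unit := toChaotic _ fun _ => ()
    have hp : RlpI p := rlpI_iff.mpr ⟨fun _ => ⟨none, rfl⟩, fun _ _ _ => trivial⟩
    have := hf p hp
    have sq : CommSq (toChaotic P some) f p (toChaotic Q fun _ => ()) := ⟨rfl⟩
    have hl : sq.lift.toFun ∘ f.toFun = some := congrArg MonPresHom.toFun sq.fac_left
    exact Injective.of_comp (hl ▸ Option.some_injective _)
  · obtain ⟨hs, hr⟩ := rlpI_iff.mp hp
    exact hasLiftingProperty_of_injective hf hs hr

theorem mono_iff_injective {P Q : RPres} (f : P ⟶ Q) : Mono f ↔ Injective f.toFun := by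
  refine ⟨fun hf a b hab => ?_, fun hf => ⟨fun g₁ g₂ hg => ?_⟩⟩
  · have hg : ofDiag P (fun _ : Unit => a) ≫ f = ofDiag P (fun _ => b) ≫ f :=
      hom_ext (funext fun _ => hab)
    exact congrFun (congrArg MonPresHom.toFun (cancel_mono f |>.mp hg)) ()
  · exact hom_ext (hf.comp_left (congrArg MonPresHom.toFun hg))

end RPres

/-- in the category of reflexive presentations, a morphism is in
`llp(rlp(I))` iff its underlying function on generators is injective;
equivalently, the cofibrations generated by `I` are exactly the monomorphisms
of the category. -/
theorem stmt13 {P Q : RPres} (f : P ⟶ Q) :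
    (Cofib f ↔ Function.Injective (MonPresHom.toFun f)) ∧
    (Cofib f ↔ Mono f) :=
  ⟨RPres.cofib_iff_injective f,
    (RPres.cofib_iff_injective f).trans (RPres.mono_iff_injective f).symm⟩
end
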